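/- arXiv:2003.00250 — 4 statements merged into one kernel-verified Lean document; each statement's English description precedes it below -/
import Mathlib

section
/- Let n ≥ 1 be an integer and let Z₀ = {−(n+1), −n, n, n+1}. Then every nonzero integer p belongs to Z_j for some j ≥ 0; that is, ℤ \ {0} ⊆ ⋃_{j≥0} Z_j. -/
/-- Let `n ≥ 1` and `Z 0 = {-(n+1), -n, n, n+1}`, with
`Z (j+1) = {k + ℓ + m : k ∈ Z j, ℓ ∈ Z 0, m ∈ Z 0}`. Then every nonzero
integer belongs to some `Z j`. -/
theorem stmt_2 (n : ℕ) (hn : 1 ≤ n) (Z : ℕ → Set ℤ)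
    (hZ0 : Z 0 = {-((n : ℤ) + 1), -(n : ℤ), (n : ℤ), (n : ℤ) + 1})
    (hZsucc : ∀ i : ℕ,
      Z (i + 1) = {x : ℤ | ∃ k ∈ Z i, ∃ l ∈ Z 0, ∃ m ∈ Z 0, x = k + l + m}) :
    ∀ p : ℤ, p ≠ 0 → ∃ i : ℕ, p ∈ Z i := by
  have hp1 : ((n : ℤ) + 1) ∈ Z 0 := by rw [hZ0]; simp
  have hm : (-(n : ℤ)) ∈ Z 0 := by rw [hZ0]; simp
  have hmp1 : (-((n : ℤ) + 1)) ∈ Z 0 := by rw [hZ0]; simp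
  have hp : ((n : ℤ)) ∈ Z 0 := by rw [hZ0]; simp
  have step : ∀ j : ℕ, ∀ a ∈ Z j, a + 1 ∈ Z (j + 1) ∧ a - 1 ∈ Z (j + 1) := by
    intro j a ha
    constructor
    · rw [hZsucc]
      exact ⟨a, ha, (n : ℤ) + 1, hp1, -(n : ℤ), hm, by ring⟩
    · rw [hZsucc]
      exact ⟨a, ha, -((n : ℤ) + 1), hmp1, (n : ℤ), hp, by ring⟩
  have key : ∀ j : ℕ, ((n : ℤ) + j ∈ Z j ∧ (n : ℤ) - j ∈ Z j ∧
      -(n : ℤ) + j ∈ Z j ∧ -(n : ℤ) - j ∈ Z j) := by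
    intro j
    induction j with
    | zero => exact ⟨by simpa using hp, by simpa using hp, by simpa using hm, by simpa using hm⟩
    | succ j ih =>
      obtain ⟨h1, h2, h3, h4⟩ := ih
      refine ⟨?_, ?_, ?_, ?_⟩
      · have e : (n : ℤ) + ((j + 1 : ℕ) : ℤ) = ((n : ℤ) + j) + 1 := by push_cast; ring
        rw [e]; exact (step j _ h1).1
      · have e : (n : ℤ) - ((j + 1 : ℕ) : ℤ) = ((n : ℤ) - j) - 1 := by push_cast; ring
        rw [e]; exact (step j _ h2).2
      · have e : -(n : ℤ) + ((j + 1 : ℕ) : ℤ) = (-(n : ℤ) + j) + 1 := by push_cast; ring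
        rw [e]; exact (step j _ h3).1
      · have e : -(n : ℤ) - ((j + 1 : ℕ) : ℤ) = (-(n : ℤ) - j) - 1 := by push_cast; ring
        rw [e]; exact (step j _ h4).2
  intro p hp0
  rcases lt_or_gt_of_ne hp0 with hneg | hpos
  · rcases le_or_gt p (-(n : ℤ)) with h | h
    · refine ⟨(-(n : ℤ) - p).toNat, ?_⟩
      have h' := (key (-(n : ℤ) - p).toNat).2.2.2
      have e : ((((-(n : ℤ)) - p).toNat : ℤ)) = -(n : ℤ) - p := Int.toNat_of_nonneg (by omega)
      rw [e] at h'
      have : -(n : ℤ) - (-(n : ℤ) - p) = p := by ring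
      rwa [this] at h'
    · refine ⟨((n : ℤ) + p).toNat, ?_⟩
      have h' := (key ((n : ℤ) + p).toNat).2.2.1
      have e : ((((n : ℤ) + p).toNat : ℤ)) = (n : ℤ) + p := Int.toNat_of_nonneg (by omega)
      rw [e] at h'
      have : -(n : ℤ) + ((n : ℤ) + p) = p := by ring
      rwa [this] at h'
  · rcases le_or_gt ((n : ℤ)) p with h | h
    · refine ⟨(p - (n : ℤ)).toNat, ?_⟩
      have h' := (key (p - (n : ℤ)).toNat).1
      have e : (((p - (n : ℤ)).toNat : ℤ)) = p - (n : ℤ) := Int.toNat_of_nonneg (by omega)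
      rw [e] at h'
      have : (n : ℤ) + (p - (n : ℤ)) = p := by ring
      rwa [this] at h'
    · refine ⟨((n : ℤ) - p).toNat, ?_⟩
      have h' := (key ((n : ℤ) - p).toNat).2.1
      have e : ((((n : ℤ) - p).toNat : ℤ)) = (n : ℤ) - p := Int.toNat_of_nonneg (by omega)
      rw [e] at h'
      have : (n : ℤ) - ((n : ℤ) - p) = p := by ring
      rwa [this] at h'
end

section
/- Let s ≤ t be real numbers and let U, ρ : [s,t] × ℝ → ℝ be continuous functions, 2π-periodic in the second (spatial) variable, such that ρ is continuously differentiable in time and twice continuously differentiable in space with jointly continuous derivatives. Assume that for every r ∈ [s,t] the function z ↦ ρ(r,z) is mean-zero, and that ∂_r ρ(r,z) = ∂_z²ρ(r,z) + ρ(r,z) − 3U(r,z)²ρ(r,z) for all (r,z). Then ∫₀^{2π} ρ(t,z)² dz ≤ ∫₀^{2π} ρ(s,z)² dz. -/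
/-!
The energy `E(r) = ∫₀^{2π} ρ(r,z)² dz` is nonincreasing. Differentiating under the integral and
using the equation, `E'(r) ≤ 2 ∫ ρ (ρ_zz + ρ) = 2 (∫ ρ² - ∫ ρ_z²)` after integrating by parts over
a period (the term `-6 ∫ U²ρ²` only helps). This is `≤ 0` by Wirtinger's inequality for mean-zero
periodic functions, which follows from Parseval: `c₀(ρ) = 0` and `|c_n(ρ)| = |c_n(ρ_z)| / |n|`.
-/

open MeasureTheory Set Real Complex intervalIntegral Function

theorem memLp_restrict_Ioc_of_continuousOn {E : Type*} [NormedAddCommGroup E] {f : ℝ → E}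
    {a b : ℝ} (hf : ContinuousOn f (Icc a b)) (p : ENNReal) :
    MemLp f p (volume.restrict (Ioc a b)) := by
  obtain ⟨C, hC⟩ := isCompact_Icc.exists_bound_of_continuousOn hf
  exact .of_bound ((hf.mono Ioc_subset_Icc_self).aestronglyMeasurable measurableSet_Ioc) C
    ((ae_restrict_iff' measurableSet_Ioc).2 (ae_of_all _ fun x hx => hC x (Ioc_subset_Icc_self hx)))

theorem fourierCoeffOn_ofReal_zero {a b : ℝ} (hab : a < b) (f : ℝ → ℝ) :
    fourierCoeffOn hab (fun x => (f x : ℂ)) 0 = ((b - a)⁻¹ * ∫ x in a..b, f x : ℝ) := by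
  simp [fourierCoeffOn_eq_integral, intervalIntegral.integral_ofReal]

theorem norm_fourierCoeffOn_le_of_hasDerivAt {a b : ℝ} (hab : a < b) {f f' : ℝ → ℂ}
    (hf : ∀ x ∈ Icc a b, HasDerivAt f (f' x) x) (hf' : IntervalIntegrable f' volume a b)
    (hfab : f a = f b) {n : ℤ} (hn : n ≠ 0) :
    ‖fourierCoeffOn hab f n‖ ≤ (b - a) / (2 * π) * ‖fourierCoeffOn hab f' n‖ := by
  rw [← uIcc_of_le hab.le] at hf
  have hn1 : (1 : ℝ) ≤ |(n : ℝ)| := by exact_mod_cast Int.one_le_abs hn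
  rw [fourierCoeffOn_of_hasDerivAt hab hn hf hf', hfab, sub_self, mul_zero, zero_sub, ← ofReal_sub]
  simp only [norm_mul, norm_neg, one_div, norm_inv, Complex.norm_two, norm_real, norm_I,
    norm_intCast, Real.norm_eq_abs, abs_of_pos pi_pos, abs_of_pos (sub_pos.2 hab), mul_one]
  calc _ = (b - a) / (2 * π) / |(n : ℝ)| * ‖fourierCoeffOn hab f' n‖ := by ring
    _ ≤ _ := by gcongr ?_ * _; exact div_le_self (by positivity) hn1

theorem integral_sq_le_mul_integral_deriv_sq {a b : ℝ} (hab : a < b) {f f' : ℝ → ℝ}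
    (hf : ∀ x ∈ Icc a b, HasDerivAt f (f' x) x) (hf' : ContinuousOn f' (Icc a b))
    (hfab : f a = f b) (hmean : ∫ x in a..b, f x = 0) :
    ∫ x in a..b, f x ^ 2 ≤ ((b - a) / (2 * π)) ^ 2 * ∫ x in a..b, f' x ^ 2 := by
  set g : ℝ → ℂ := fun x => f x
  set g' : ℝ → ℂ := fun x => f' x
  have hg : ∀ x ∈ Icc a b, HasDerivAt g (g' x) x := fun x hx => (hf x hx).ofReal_comp
  have hg' : ContinuousOn g' (Icc a b) := continuous_ofReal.comp_continuousOn hf'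
  have hcoeff : ∀ n : ℤ, ‖fourierCoeffOn hab g n‖ ^ 2
      ≤ ((b - a) / (2 * π)) ^ 2 * ‖fourierCoeffOn hab g' n‖ ^ 2 := by
    intro n
    rcases eq_or_ne n 0 with rfl | hn
    · rw [fourierCoeffOn_ofReal_zero, hmean, mul_zero, ofReal_zero, norm_zero, sq, zero_mul]
      positivity
    · rw [← mul_pow]
      gcongr
      exact norm_fourierCoeffOn_le_of_hasDerivAt hab hg
        (hg'.intervalIntegrable_of_Icc hab.le) (congrArg ofReal hfab) hn
  have hparseval := hasSum_le hcoeff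
    (hasSum_sq_fourierCoeffOn hab (memLp_restrict_Ioc_of_continuousOn
      (HasDerivAt.continuousOn hg) 2))
    ((hasSum_sq_fourierCoeffOn hab (memLp_restrict_Ioc_of_continuousOn hg' 2)).mul_left _)
  simp only [g, g', norm_real, Real.norm_eq_abs, sq_abs, smul_eq_mul] at hparseval
  rw [mul_left_comm] at hparseval
  exact le_of_mul_le_mul_left hparseval (inv_pos.2 (sub_pos.2 hab))

theorem Function.Periodic.hasDerivAt_add_period {f : ℝ → ℝ} {T x d d' : ℝ}
    (hf : Periodic f T) (h : HasDerivAt f d x) (h' : HasDerivAt f d' (x + T)) : d' = d := by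
  have hshift := h'.comp_add_const x T
  rw [show (fun y => f (y + T)) = f from funext hf] at hshift
  exact hshift.unique h

theorem integral_mul_deriv_deriv_eq_neg {a b : ℝ} {u u' u'' : ℝ → ℝ}
    (hu : ∀ x ∈ uIcc a b, HasDerivAt u (u' x) x) (hu' : ∀ x ∈ uIcc a b, HasDerivAt u' (u'' x) x)
    (hu'' : IntervalIntegrable u'' volume a b) (hab : u a = u b) (hab' : u' a = u' b) :
    ∫ x in a..b, u x * u'' x = -∫ x in a..b, u' x ^ 2 := by
  rw [integral_mul_deriv_eq_deriv_mul hu hu'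
    (HasDerivAt.continuousOn hu').intervalIntegrable hu'', hab, hab', sub_self, zero_sub]
  simp only [sq]

theorem integral_mul_deriv_deriv_add_sq_nonpos {f f' f'' : ℝ → ℝ}
    (hf : ∀ x, HasDerivAt f (f' x) x) (hf' : ∀ x, HasDerivAt f' (f'' x) x) (hf'' : Continuous f'')
    (hper : Periodic f (2 * π)) (hmean : ∫ x in 0..2 * π, f x = 0) :
    ∫ x in 0..2 * π, (f x * f'' x + f x ^ 2) ≤ 0 := by
  have hfc : Continuous f := continuous_iff_continuousAt.2 fun x => (hf x).continuousAt
  have hbdry : f 0 = f (2 * π) := by simpa using (hper 0).symm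
  have hbdry' : f' 0 = f' (2 * π) :=
    (hper.hasDerivAt_add_period (hf 0) (by simpa using hf (2 * π))).symm
  have hwirtinger : ∫ x in 0..2 * π, f x ^ 2 ≤ ∫ x in 0..2 * π, f' x ^ 2 := by
    simpa [div_self two_pi_pos.ne'] using integral_sq_le_mul_integral_deriv_sq two_pi_pos
      (fun x _ => hf x) (fun x _ => (hf' x).continuousAt.continuousWithinAt) hbdry hmean
  have hibp := integral_mul_deriv_deriv_eq_neg (fun x _ => hf x) (fun x _ => hf' x)
    (hf''.intervalIntegrable _ _) hbdry hbdry'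
  rw [integral_add (f := fun x => f x * f'' x) (g := fun x => f x ^ 2)
    ((hfc.mul hf'').intervalIntegrable _ _) ((hfc.pow 2).intervalIntegrable _ _), hibp]
  linarith

theorem integral_mul_nonpos_of_eq_deriv_deriv_add_sub_mul {f f' f'' g c : ℝ → ℝ}
    (hf : ∀ x, HasDerivAt f (f' x) x) (hf' : ∀ x, HasDerivAt f' (f'' x) x) (hf'' : Continuous f'')
    (hper : Periodic f (2 * π)) (hmean : ∫ x in 0..2 * π, f x = 0) (hg : Continuous g)
    (hc : ∀ x, 0 ≤ c x) (hfg : ∀ x, g x = f'' x + f x - c x * f x) :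
    ∫ x in 0..2 * π, f x * g x ≤ 0 := by
  have hfc : Continuous f := continuous_iff_continuousAt.2 fun x => (hf x).continuousAt
  refine (integral_mono_on two_pi_pos.le ((hfc.fun_mul hg).intervalIntegrable _ _)
    (((hfc.fun_mul hf'').fun_add (hfc.fun_pow 2)).intervalIntegrable _ _) fun x _ => ?_).trans
    (integral_mul_deriv_deriv_add_sq_nonpos hf hf' hf'' hper hmean)
  rw [hfg x]
  nlinarith [mul_nonneg (hc x) (sq_nonneg (f x))]

theorem continuousOn_intervalIntegral_of_continuousOn_uncurry {F : ℝ → ℝ → ℝ} {s t a b : ℝ}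
    (hF : ContinuousOn (uncurry F) (Icc s t ×ˢ uIcc a b)) :
    ContinuousOn (fun r => ∫ z in a..b, F r z) (Icc s t) := by
  obtain ⟨C, hC⟩ := (isCompact_Icc.prod isCompact_uIcc).exists_bound_of_continuousOn hF
  intro r hr
  refine continuousWithinAt_of_dominated_interval (bound := fun _ => C) ?_ ?_
    intervalIntegrable_const ?_
  · filter_upwards [self_mem_nhdsWithin] with r' hr'
    exact ((hF.uncurry_left r' hr').mono uIoc_subset_uIcc).aestronglyMeasurable measurableSet_uIoc
  · filter_upwards [self_mem_nhdsWithin] with r' hr'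
    exact ae_of_all _ fun z hz => hC (r', z) ⟨hr', uIoc_subset_uIcc hz⟩
  · exact ae_of_all _ fun z hz => hF.uncurry_right z (uIoc_subset_uIcc hz) r hr

theorem hasDerivAt_intervalIntegral_of_continuousOn_uncurry {F F' : ℝ → ℝ → ℝ} {s t a b r : ℝ}
    (hF : ContinuousOn (uncurry F) (Icc s t ×ˢ uIcc a b))
    (hF' : ContinuousOn (uncurry F') (Icc s t ×ˢ uIcc a b))
    (hderiv : ∀ r ∈ Ioo s t, ∀ z ∈ uIcc a b, HasDerivAt (F · z) (F' r z) r) (hr : r ∈ Ioo s t) :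
    HasDerivAt (fun r => ∫ z in a..b, F r z) (∫ z in a..b, F' r z) r := by
  obtain ⟨C, hC⟩ := (isCompact_Icc.prod isCompact_uIcc).exists_bound_of_continuousOn hF'
  refine (hasDerivAt_integral_of_dominated_loc_of_deriv_le (bound := fun _ => C)
    (Ioo_mem_nhds hr.1 hr.2) ?_ ?_ ?_ ?_ intervalIntegrable_const ?_).2
  · filter_upwards [Ioo_mem_nhds hr.1 hr.2] with r' hr'
    exact ((hF.uncurry_left r' (Ioo_subset_Icc_self hr')).mono
      uIoc_subset_uIcc).aestronglyMeasurable measurableSet_uIoc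
  · exact (hF.uncurry_left r (Ioo_subset_Icc_self hr)).intervalIntegrable
  · exact ((hF'.uncurry_left r (Ioo_subset_Icc_self hr)).mono
      uIoc_subset_uIcc).aestronglyMeasurable measurableSet_uIoc
  · exact ae_of_all _ fun z hz r' hr' => hC (r', z) ⟨Ioo_subset_Icc_self hr', uIoc_subset_uIcc hz⟩
  · exact ae_of_all _ fun z hz r' hr' => hderiv r' hr' z (uIoc_subset_uIcc hz)

theorem antitoneOn_intervalIntegral_of_integral_deriv_nonpos {F F' : ℝ → ℝ → ℝ} {s t a b : ℝ}
    (hF : ContinuousOn (uncurry F) (Icc s t ×ˢ uIcc a b))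
    (hF' : ContinuousOn (uncurry F') (Icc s t ×ˢ uIcc a b))
    (hderiv : ∀ r ∈ Ioo s t, ∀ z ∈ uIcc a b, HasDerivAt (F · z) (F' r z) r)
    (hnonpos : ∀ r ∈ Ioo s t, ∫ z in a..b, F' r z ≤ 0) :
    AntitoneOn (fun r => ∫ z in a..b, F r z) (Icc s t) := by
  refine antitoneOn_of_hasDerivWithinAt_nonpos (f' := fun r => ∫ z in a..b, F' r z)
    (convex_Icc s t) (continuousOn_intervalIntegral_of_continuousOn_uncurry hF)
    (fun r hr => ?_) fun r hr => ?_
  all_goals rw [interior_Icc] at hr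
  exacts [(hasDerivAt_intervalIntegral_of_continuousOn_uncurry hF hF' hderiv hr).hasDerivWithinAt,
    hnonpos r hr]

theorem stmt_5_general (s t : ℝ) (hst : s ≤ t)
    (U ρ ρt ρz ρzz : ℝ → ℝ → ℝ)
    (hρcont : ContinuousOn (fun p : ℝ × ℝ => ρ p.1 p.2) (Set.Icc s t ×ˢ Set.univ))
    (hρtcont : ContinuousOn (fun p : ℝ × ℝ => ρt p.1 p.2) (Set.Icc s t ×ˢ Set.univ))
    (hρzzcont : ContinuousOn (fun p : ℝ × ℝ => ρzz p.1 p.2) (Set.Icc s t ×ˢ Set.univ))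
    (hρper : ∀ r ∈ Set.Icc s t, ∀ z : ℝ, ρ r (z + 2 * Real.pi) = ρ r z)
    (hρt : ∀ r ∈ Set.Icc s t, ∀ z : ℝ, HasDerivAt (fun r' => ρ r' z) (ρt r z) r)
    (hρz : ∀ r ∈ Set.Icc s t, ∀ z : ℝ, HasDerivAt (fun z' => ρ r z') (ρz r z) z)
    (hρzz : ∀ r ∈ Set.Icc s t, ∀ z : ℝ, HasDerivAt (fun z' => ρz r z') (ρzz r z) z)
    (hmean : ∀ r ∈ Set.Icc s t, (∫ z in (0 : ℝ)..(2 * Real.pi), ρ r z) = 0)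
    (hpde : ∀ r ∈ Set.Icc s t, ∀ z : ℝ,
      ρt r z = ρzz r z + ρ r z - 3 * (U r z) ^ 2 * ρ r z) :
    ∫ z in (0 : ℝ)..(2 * Real.pi), (ρ t z) ^ 2
      ≤ ∫ z in (0 : ℝ)..(2 * Real.pi), (ρ s z) ^ 2 := by
  have hdissipation : ∀ r ∈ Ioo s t, ∫ z in 0..2 * π, 2 * (ρ r z * ρt r z) ≤ 0 := by
    intro r hr
    replace hr := Ioo_subset_Icc_self hr
    rw [intervalIntegral.integral_const_mul]
    exact mul_nonpos_of_nonneg_of_nonpos zero_le_two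
      (integral_mul_nonpos_of_eq_deriv_deriv_add_sub_mul (c := fun z => 3 * U r z ^ 2)
        (hρz r hr) (hρzz r hr) (continuousOn_univ.1 (hρzzcont.uncurry_left r hr))
        (hρper r hr) (hmean r hr)
        (continuousOn_univ.1 (hρtcont.uncurry_left r hr)) (fun z => by positivity) (hpde r hr))
  have hslab : Icc s t ×ˢ uIcc 0 (2 * π) ⊆ Icc s t ×ˢ univ := prod_mono_right (subset_univ _)
  refine antitoneOn_intervalIntegral_of_integral_deriv_nonpos (F := fun r z => ρ r z ^ 2)
    (F' := fun r z => 2 * (ρ r z * ρt r z)) ((hρcont.mono hslab).fun_pow 2)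
    (continuousOn_const.fun_mul ((hρcont.mono hslab).fun_mul (hρtcont.mono hslab)))
    (fun r hr z _ => ?_) hdissipation ⟨le_rfl, hst⟩ ⟨hst, le_rfl⟩ hst
  simpa [mul_assoc] using (hρt r (Ioo_subset_Icc_self hr) z).fun_pow 2

/-- Pathwise contraction for the first variation equation
`∂_r ρ = ∂_z²ρ + ρ − 3U²ρ` on `[s,t] × ℝ` with `2π`-periodicity in space and
mean-zero spatial slices: `∫₀^{2π} ρ(t,z)² dz ≤ ∫₀^{2π} ρ(s,z)² dz`.
The spatial derivative `ρz` and second spatial derivative `ρzz`, and the time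
derivative `ρt`, are given as jointly continuous functions on the domain. -/
theorem stmt_5 (s t : ℝ) (hst : s ≤ t)
    (U ρ ρt ρz ρzz : ℝ → ℝ → ℝ)
    (hUcont : ContinuousOn (fun p : ℝ × ℝ => U p.1 p.2) (Set.Icc s t ×ˢ Set.univ))
    (hρcont : ContinuousOn (fun p : ℝ × ℝ => ρ p.1 p.2) (Set.Icc s t ×ˢ Set.univ))
    (hρtcont : ContinuousOn (fun p : ℝ × ℝ => ρt p.1 p.2) (Set.Icc s t ×ˢ Set.univ))
    (hρzcont : ContinuousOn (fun p : ℝ × ℝ => ρz p.1 p.2) (Set.Icc s t ×ˢ Set.univ))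
    (hρzzcont : ContinuousOn (fun p : ℝ × ℝ => ρzz p.1 p.2) (Set.Icc s t ×ˢ Set.univ))
    (hUper : ∀ r ∈ Set.Icc s t, ∀ z : ℝ, U r (z + 2 * Real.pi) = U r z)
    (hρper : ∀ r ∈ Set.Icc s t, ∀ z : ℝ, ρ r (z + 2 * Real.pi) = ρ r z)
    (hρt : ∀ r ∈ Set.Icc s t, ∀ z : ℝ, HasDerivAt (fun r' => ρ r' z) (ρt r z) r)
    (hρz : ∀ r ∈ Set.Icc s t, ∀ z : ℝ, HasDerivAt (fun z' => ρ r z') (ρz r z) z)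
    (hρzz : ∀ r ∈ Set.Icc s t, ∀ z : ℝ, HasDerivAt (fun z' => ρz r z') (ρzz r z) z)
    (hmean : ∀ r ∈ Set.Icc s t, (∫ z in (0 : ℝ)..(2 * Real.pi), ρ r z) = 0)
    (hpde : ∀ r ∈ Set.Icc s t, ∀ z : ℝ,
      ρt r z = ρzz r z + ρ r z - 3 * (U r z) ^ 2 * ρ r z) :
    ∫ z in (0 : ℝ)..(2 * Real.pi), (ρ t z) ^ 2
      ≤ ∫ z in (0 : ℝ)..(2 * Real.pi), (ρ s z) ^ 2 :=
  stmt_5_general s t hst U ρ ρt ρz ρzz hρcont hρtcont hρzzcont hρper hρt hρz hρzz hmean hpde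
end

section
/- Let s ≤ t be real numbers and let U, a, b, ϱ : [s,t] × ℝ → ℝ be continuous functions, 2π-periodic in the second (spatial) variable, with ϱ continuously differentiable in time and twice continuously differentiable in space with jointly continuous derivatives. Assume ϱ(s,z) = 0 for all z, and that ∂_r ϱ(r,z) = ∂_z²ϱ(r,z) + ϱ(r,z) − 3U(r,z)²ϱ(r,z) − 6U(r,z)a(r,z)b(r,z) for all (r,z). Then ∫₀^{2π} ϱ(t,z)² dz ≤ 12 ∫_s^t e^{2(t−r)} (sup_{z∈ℝ} a(r,z)²) (∫₀^{2π} b(r,z)² dz) dr. -/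
/-!
Write `E r = ∫₀^{2π} ϱ(r,z)² dz`. Differentiating under the integral and substituting the equation,
`E' = 2∫ϱ ∂_z²ϱ + 2E − 6∫U²ϱ² − 12∫Uϱab`. By periodicity, integration by parts turns the first
term into `−2∫(∂_zϱ)² ≤ 0`, and completing the square, `−6U²ϱ² − 12Uϱab ≤ 6a²b²`. Hence
`E' ≤ 2E + 6 (sup a²) ∫b²`, and Grönwall's inequality with `E s = 0` gives the bound (even with
`6` in place of `12`).
-/

open MeasureTheory Set Function

section Slices

variable {s t : ℝ} {f : ℝ → ℝ → ℝ}

theorem ContinuousOn.continuous_slice (hf : ContinuousOn (uncurry f) (Icc s t ×ˢ univ))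
    {r : ℝ} (hr : r ∈ Icc s t) : Continuous (f r) :=
  hf.comp_continuous (f := fun z => (r, z)) (by fun_prop) fun _ => ⟨hr, trivial⟩

theorem ContinuousOn.continuous_uncurry_restrict
    (hf : ContinuousOn (uncurry f) (Icc s t ×ˢ univ)) :
    Continuous fun p : Icc s t × ℝ => f p.1 p.2 :=
  hf.comp_continuous (f := fun p : Icc s t × ℝ => ((p.1 : ℝ), p.2)) (by fun_prop)
    fun p => ⟨p.1.2, trivial⟩

theorem ContinuousOn.intervalIntegral_slice (hf : ContinuousOn (uncurry f) (Icc s t ×ˢ univ))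
    (a b : ℝ) : ContinuousOn (fun r => ∫ z in a..b, f r z) (Icc s t) :=
  continuousOn_iff_continuous_domRestrict.mpr <|
    intervalIntegral.continuous_parametric_intervalIntegral_of_continuous'
      (f := fun (r : Icc s t) z => f r z) hf.continuous_uncurry_restrict a b

theorem hasDerivAt_intervalIntegral_slice {f' : ℝ → ℝ → ℝ}
    (hf : ContinuousOn (uncurry f) (Icc s t ×ˢ univ))
    (hf' : ContinuousOn (uncurry f') (Icc s t ×ˢ univ))
    (hderiv : ∀ r ∈ Icc s t, ∀ z, HasDerivAt (f · z) (f' r z) r) (a b : ℝ) {r : ℝ}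
    (hr : r ∈ Ioo s t) :
    HasDerivAt (fun x => ∫ z in a..b, f x z) (∫ z in a..b, f' r z) r := by
  obtain ⟨C, hC⟩ := (isCompact_Icc.prod isCompact_uIcc).exists_bound_of_continuousOn
    (hf'.mono (prod_mono_right (subset_univ (uIcc a b))))
  have hIoo : Ioo s t ⊆ Icc s t := Ioo_subset_Icc_self
  refine (intervalIntegral.hasDerivAt_integral_of_dominated_loc_of_deriv_le
    (Ioo_mem_nhds hr.1 hr.2) ?_ ((hf.continuous_slice (hIoo hr)).intervalIntegrable a b)
    (hf'.continuous_slice (hIoo hr)).aestronglyMeasurable.restrict ?_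
    (intervalIntegrable_const (c := C)) ?_).2
  · filter_upwards [Ioo_mem_nhds hr.1 hr.2] with x hx
    exact (hf.continuous_slice (hIoo hx)).aestronglyMeasurable.restrict
  · exact .of_forall fun z hz x hx => hC (x, z) ⟨hIoo hx, uIoc_subset_uIcc hz⟩
  · exact .of_forall fun z _ x hx => hderiv x (hIoo hx) z

theorem Function.Periodic.bddAbove_range {g : ℝ → ℝ} {T : ℝ} (hg : Periodic g T) (hT : 0 < T)
    (hgc : Continuous g) : BddAbove (range g) := by
  rw [← hg.image_Icc hT 0]
  exact isCompact_Icc.bddAbove_image hgc.continuousOn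

variable {T : ℝ}

theorem ContinuousOn.le_iSup_slice_of_periodic (hf : ContinuousOn (uncurry f) (Icc s t ×ˢ univ))
    (hT : 0 < T) (hper : ∀ r ∈ Icc s t, Periodic (f r) T) {r : ℝ} (hr : r ∈ Icc s t) (z : ℝ) :
    f r z ≤ ⨆ z, f r z :=
  le_ciSup ((hper r hr).bddAbove_range hT (hf.continuous_slice hr)) z

theorem ContinuousOn.iSup_slice_of_periodic (hf : ContinuousOn (uncurry f) (Icc s t ×ˢ univ))
    (hT : 0 < T) (hper : ∀ r ∈ Icc s t, Periodic (f r) T) :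
    ContinuousOn (fun r => ⨆ z, f r z) (Icc s t) := by
  rw [continuousOn_iff_continuous_domRestrict]
  convert (isCompact_Icc (a := 0) (b := 0 + T)).continuous_sSup
    (f := fun (r : Icc s t) z => f r z) hf.continuous_uncurry_restrict using 2 with r
  rw [(hper r r.2).image_Icc hT 0]
  rfl

end Slices

theorem Function.Periodic.periodic_of_hasDerivAt {u u' : ℝ → ℝ} {T : ℝ} (hper : Periodic u T)
    (hu : ∀ x, HasDerivAt u (u' x) x) : Periodic u' T := fun x => by
  have hshift := (hu (x + T)).comp_add_const x T
  rw [hper.funext] at hshift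
  exact hshift.unique (hu x)

theorem integral_mul_deriv_deriv_nonpos_of_periodic {u u' u'' : ℝ → ℝ} {T : ℝ} (hT : 0 ≤ T)
    (hper : Periodic u T) (hu : ∀ x, HasDerivAt u (u' x) x) (hu' : ∀ x, HasDerivAt u' (u'' x) x)
    (hu'' : IntervalIntegrable u'' volume 0 T) : ∫ x in 0..T, u x * u'' x ≤ 0 := by
  have hu'c : Continuous u' := continuous_iff_continuousAt.mpr fun x => (hu' x).continuousAt
  have hu0 : u T = u 0 := by simpa using hper 0
  have hu'0 : u' T = u' 0 := by simpa using hper.periodic_of_hasDerivAt hu 0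
  rw [intervalIntegral.integral_mul_deriv_eq_deriv_mul (fun x _ => hu x) (fun x _ => hu' x)
    (hu'c.intervalIntegrable 0 T) hu'', hu0, hu'0, sub_self, zero_sub, neg_nonpos]
  exact intervalIntegral.integral_nonneg hT fun x _ => mul_self_nonneg (u' x)

theorem secondVariation_energy_deriv_le {ρ ρ' ρ'' ρt U a b : ℝ → ℝ} {T S : ℝ}
    (hT : 0 ≤ T) (hper : Periodic ρ T) (hρ : ∀ z, HasDerivAt ρ (ρ' z) z)
    (hρ' : ∀ z, HasDerivAt ρ' (ρ'' z) z) (hρ'' : Continuous ρ'') (hρt : Continuous ρt)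
    (hb : Continuous b) (ha : ∀ z, a z ^ 2 ≤ S)
    (heq : ∀ z, ρt z = ρ'' z + ρ z - 3 * U z ^ 2 * ρ z - 6 * U z * a z * b z) :
    ∫ z in 0..T, 2 * ρ z * ρt z
      ≤ 2 * (∫ z in 0..T, ρ z ^ 2) + 6 * (S * ∫ z in 0..T, b z ^ 2) := by
  have hρc : Continuous ρ := continuous_iff_continuousAt.mpr fun x => (hρ x).continuousAt
  have hint {F : ℝ → ℝ} (hF : Continuous F) : IntervalIntegrable F volume 0 T :=
    hF.intervalIntegrable 0 T
  have hdiss : ∫ z in 0..T, ρ z * ρ'' z ≤ 0 :=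
    integral_mul_deriv_deriv_nonpos_of_periodic hT hper hρ hρ' (hint hρ'')
  have hforcing : ∫ z in 0..T, (2 * ρ z * ρt z - 2 * (ρ z * ρ'' z))
      ≤ ∫ z in 0..T, (2 * ρ z ^ 2 + 6 * S * b z ^ 2) := by
    refine intervalIntegral.integral_mono_on hT (hint (by fun_prop)) (hint (by fun_prop))
      fun z _ => ?_
    rw [heq z]
    nlinarith [sq_nonneg (U z * ρ z + a z * b z),
      mul_le_mul_of_nonneg_right (ha z) (sq_nonneg (b z))]
  calc ∫ z in 0..T, 2 * ρ z * ρt z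
      = 2 * (∫ z in 0..T, ρ z * ρ'' z) + ∫ z in 0..T, (2 * ρ z * ρt z - 2 * (ρ z * ρ'' z)) := by
        rw [← intervalIntegral.integral_const_mul, ← intervalIntegral.integral_add
          (hint (by fun_prop)) (hint (by fun_prop))]
        congr 1 with z
        ring
    _ ≤ ∫ z in 0..T, (2 * ρ z ^ 2 + 6 * S * b z ^ 2) := by linarith
    _ = 2 * (∫ z in 0..T, ρ z ^ 2) + 6 * (S * ∫ z in 0..T, b z ^ 2) := by
        rw [intervalIntegral.integral_add (hint (by fun_prop)) (hint (by fun_prop)),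
          intervalIntegral.integral_const_mul, intervalIntegral.integral_const_mul]
        ring

theorem le_exp_mul_add_integral_of_hasDerivAt_le {E E' g : ℝ → ℝ} {K s t : ℝ} (hst : s ≤ t)
    (hE : ContinuousOn E (Icc s t)) (hg : ContinuousOn g (Icc s t))
    (hE' : ∀ r ∈ Ioo s t, HasDerivAt E (E' r) r) (hle : ∀ r ∈ Ioo s t, E' r ≤ K * E r + g r) :
    E t ≤ Real.exp (K * (t - s)) * E s + ∫ r in s..t, Real.exp (K * (t - r)) * g r := by
  set G : ℝ → ℝ := fun r => Real.exp (-(K * r)) * g r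
  have hGc : ContinuousOn G (Icc s t) := by fun_prop
  have hGi : IntervalIntegrable G volume s t := hGc.intervalIntegrable_of_Icc hst
  have hanti : AntitoneOn (fun r => Real.exp (-(K * r)) * E r - ∫ u in s..r, G u) (Icc s t) := by
    refine antitoneOn_of_hasDerivWithinAt_nonpos (convex_Icc s t)
      (f' := fun r => -K * Real.exp (-(K * r)) * E r + Real.exp (-(K * r)) * E' r - G r) ?_ ?_ ?_
    · have := intervalIntegral.continuousOn_primitive_interval' hGi left_mem_uIcc
      rw [uIcc_of_le hst] at this
      fun_prop
    · intro r hr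
      rw [interior_Icc] at hr
      have hexp : HasDerivAt (fun r => Real.exp (-(K * r))) (-K * Real.exp (-(K * r))) r := by
        simpa [mul_comm] using ((hasDerivAt_id r).const_mul K).neg.exp
      have hprim : HasDerivAt (fun r => ∫ u in s..r, G u) (G r) r :=
        intervalIntegral.integral_hasDerivAt_right (hGi.mono_set (uIcc_subset_uIcc left_mem_uIcc
            (by rw [uIcc_of_le hst]; exact Ioo_subset_Icc_self hr)))
          ((hGc.mono Ioo_subset_Icc_self).stronglyMeasurableAtFilter isOpen_Ioo r hr)
          (hGc.continuousAt (Icc_mem_nhds hr.1 hr.2))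
      exact ((hexp.mul (hE' r hr)).sub hprim).hasDerivWithinAt
    · intro r hr
      rw [interior_Icc] at hr
      have := mul_le_mul_of_nonneg_left (hle r hr) (Real.exp_pos (-(K * r))).le
      simp only [G]
      linarith
  have hts := hanti ⟨le_rfl, hst⟩ ⟨hst, le_rfl⟩ hst
  simp only [intervalIntegral.integral_same, sub_zero] at hts
  have hscale r : Real.exp (K * (t - r)) = Real.exp (K * t) * Real.exp (-(K * r)) := by
    rw [← Real.exp_add]; ring_nf
  calc E t = Real.exp (K * t) * (Real.exp (-(K * t)) * E t) := by
        rw [← mul_assoc, ← Real.exp_add, add_neg_cancel, Real.exp_zero, one_mul]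
    _ ≤ Real.exp (K * t) * (Real.exp (-(K * s)) * E s + ∫ u in s..t, G u) := by
        gcongr; linarith
    _ = _ := by
        simp only [hscale, G, mul_assoc, intervalIntegral.integral_const_mul]
        ring

theorem stmt_7_general (s t : ℝ) (hst : s ≤ t)
    (U a b ϱ ϱt ϱz ϱzz : ℝ → ℝ → ℝ)
    (hacont : ContinuousOn (fun p : ℝ × ℝ => a p.1 p.2) (Set.Icc s t ×ˢ Set.univ))
    (hbcont : ContinuousOn (fun p : ℝ × ℝ => b p.1 p.2) (Set.Icc s t ×ˢ Set.univ))
    (hϱcont : ContinuousOn (fun p : ℝ × ℝ => ϱ p.1 p.2) (Set.Icc s t ×ˢ Set.univ))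
    (hϱtcont : ContinuousOn (fun p : ℝ × ℝ => ϱt p.1 p.2) (Set.Icc s t ×ˢ Set.univ))
    (hϱzzcont : ContinuousOn (fun p : ℝ × ℝ => ϱzz p.1 p.2) (Set.Icc s t ×ˢ Set.univ))
    (haper : ∀ r ∈ Set.Icc s t, ∀ z : ℝ, a r (z + 2 * Real.pi) = a r z)
    (hϱper : ∀ r ∈ Set.Icc s t, ∀ z : ℝ, ϱ r (z + 2 * Real.pi) = ϱ r z)
    (hϱt : ∀ r ∈ Set.Icc s t, ∀ z : ℝ, HasDerivAt (fun r' => ϱ r' z) (ϱt r z) r)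
    (hϱz : ∀ r ∈ Set.Icc s t, ∀ z : ℝ, HasDerivAt (fun z' => ϱ r z') (ϱz r z) z)
    (hϱzz : ∀ r ∈ Set.Icc s t, ∀ z : ℝ, HasDerivAt (fun z' => ϱz r z') (ϱzz r z) z)
    (hinit : ∀ z : ℝ, ϱ s z = 0)
    (hpde : ∀ r ∈ Set.Icc s t, ∀ z : ℝ,
      ϱt r z = ϱzz r z + ϱ r z - 3 * (U r z) ^ 2 * ϱ r z - 6 * U r z * a r z * b r z) :
    ∫ z in (0 : ℝ)..(2 * Real.pi), (ϱ t z) ^ 2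
      ≤ 12 * ∫ r in s..t,
          Real.exp (2 * (t - r)) * (⨆ z : ℝ, (a r z) ^ 2)
            * ∫ z in (0 : ℝ)..(2 * Real.pi), (b r z) ^ 2 := by
  have hT : 0 < 2 * Real.pi := by positivity
  have hϱ2 : ContinuousOn (uncurry fun r z => ϱ r z ^ 2) (Icc s t ×ˢ univ) := hϱcont.fun_pow 2
  have ha2 : ContinuousOn (uncurry fun r z => a r z ^ 2) (Icc s t ×ˢ univ) := hacont.fun_pow 2
  have hb2 : ContinuousOn (uncurry fun r z => b r z ^ 2) (Icc s t ×ˢ univ) := hbcont.fun_pow 2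
  have ha2per r (hr : r ∈ Icc s t) : Periodic (fun z => a r z ^ 2) (2 * Real.pi) :=
    Periodic.comp (haper r hr) (· ^ 2)
  have ha2le r (hr : r ∈ Icc s t) := ha2.le_iSup_slice_of_periodic hT ha2per hr
  have hgronwall := le_exp_mul_add_integral_of_hasDerivAt_le (K := 2) hst
    (hϱ2.intervalIntegral_slice 0 (2 * Real.pi))
    (continuousOn_const.fun_mul ((ha2.iSup_slice_of_periodic hT ha2per).fun_mul
      (hb2.intervalIntegral_slice 0 (2 * Real.pi))))
    (fun r hr => hasDerivAt_intervalIntegral_slice (f' := fun r z => 2 * ϱ r z * ϱt r z)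
      hϱ2 ((continuousOn_const.fun_mul hϱcont).fun_mul hϱtcont)
      (fun r hr z => by simpa using (hϱt r hr z).fun_pow 2) 0 (2 * Real.pi) hr)
    (fun r hr' => have hr := Ioo_subset_Icc_self hr'
      secondVariation_energy_deriv_le hT.le (hϱper r hr) (hϱz r hr) (hϱzz r hr)
        (hϱzzcont.continuous_slice hr) (hϱtcont.continuous_slice hr)
        (hbcont.continuous_slice hr) (ha2le r hr) (hpde r hr))
  simp only [hinit, ne_eq, OfNat.ofNat_ne_zero, not_false_eq_true, zero_pow,
    intervalIntegral.integral_zero, mul_zero, zero_add] at hgronwall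
  have hforcing_nonneg : 0 ≤ ∫ r in s..t, Real.exp (2 * (t - r)) * (⨆ z, a r z ^ 2)
      * ∫ z in 0..2 * Real.pi, b r z ^ 2 :=
    intervalIntegral.integral_nonneg hst fun r hr => mul_nonneg (mul_nonneg (Real.exp_pos _).le
      ((sq_nonneg _).trans (ha2le r hr 0)))
      (intervalIntegral.integral_nonneg hT.le fun z _ => sq_nonneg _)
  calc _ ≤ _ := hgronwall
    _ = 6 * ∫ r in s..t, Real.exp (2 * (t - r)) * (⨆ z, a r z ^ 2)
          * ∫ z in 0..2 * Real.pi, b r z ^ 2 := by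
        rw [← intervalIntegral.integral_const_mul]
        congr 1 with r
        ring
    _ ≤ _ := by linarith

/-- Energy inequality for the second variation equation
`∂_r ϱ = ∂_z²ϱ + ϱ − 3U²ϱ − 6·U·a·b` on `[s,t] × ℝ` with `2π`-periodicity in
space and `ϱ(s,·) = 0`:
`∫₀^{2π} ϱ(t,z)² dz ≤ 12 ∫_s^t e^{2(t−r)} (sup_z a(r,z)²)(∫₀^{2π} b(r,z)² dz) dr`. -/
theorem stmt_7 (s t : ℝ) (hst : s ≤ t)
    (U a b ϱ ϱt ϱz ϱzz : ℝ → ℝ → ℝ)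
    (hUcont : ContinuousOn (fun p : ℝ × ℝ => U p.1 p.2) (Set.Icc s t ×ˢ Set.univ))
    (hacont : ContinuousOn (fun p : ℝ × ℝ => a p.1 p.2) (Set.Icc s t ×ˢ Set.univ))
    (hbcont : ContinuousOn (fun p : ℝ × ℝ => b p.1 p.2) (Set.Icc s t ×ˢ Set.univ))
    (hϱcont : ContinuousOn (fun p : ℝ × ℝ => ϱ p.1 p.2) (Set.Icc s t ×ˢ Set.univ))
    (hϱtcont : ContinuousOn (fun p : ℝ × ℝ => ϱt p.1 p.2) (Set.Icc s t ×ˢ Set.univ))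
    (hϱzcont : ContinuousOn (fun p : ℝ × ℝ => ϱz p.1 p.2) (Set.Icc s t ×ˢ Set.univ))
    (hϱzzcont : ContinuousOn (fun p : ℝ × ℝ => ϱzz p.1 p.2) (Set.Icc s t ×ˢ Set.univ))
    (hUper : ∀ r ∈ Set.Icc s t, ∀ z : ℝ, U r (z + 2 * Real.pi) = U r z)
    (haper : ∀ r ∈ Set.Icc s t, ∀ z : ℝ, a r (z + 2 * Real.pi) = a r z)
    (hbper : ∀ r ∈ Set.Icc s t, ∀ z : ℝ, b r (z + 2 * Real.pi) = b r z)
    (hϱper : ∀ r ∈ Set.Icc s t, ∀ z : ℝ, ϱ r (z + 2 * Real.pi) = ϱ r z)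
    (hϱt : ∀ r ∈ Set.Icc s t, ∀ z : ℝ, HasDerivAt (fun r' => ϱ r' z) (ϱt r z) r)
    (hϱz : ∀ r ∈ Set.Icc s t, ∀ z : ℝ, HasDerivAt (fun z' => ϱ r z') (ϱz r z) z)
    (hϱzz : ∀ r ∈ Set.Icc s t, ∀ z : ℝ, HasDerivAt (fun z' => ϱz r z') (ϱzz r z) z)
    (hinit : ∀ z : ℝ, ϱ s z = 0)
    (hpde : ∀ r ∈ Set.Icc s t, ∀ z : ℝ,
      ϱt r z = ϱzz r z + ϱ r z - 3 * (U r z) ^ 2 * ϱ r z - 6 * U r z * a r z * b r z) :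
    ∫ z in (0 : ℝ)..(2 * Real.pi), (ϱ t z) ^ 2
      ≤ 12 * ∫ r in s..t,
          Real.exp (2 * (t - r)) * (⨆ z : ℝ, (a r z) ^ 2)
            * ∫ z in (0 : ℝ)..(2 * Real.pi), (b r z) ^ 2 :=
  stmt_7_general s t hst U a b ϱ ϱt ϱz ϱzz hacont hbcont hϱcont hϱtcont hϱzzcont haper hϱper hϱt hϱz
    hϱzz hinit hpde
end

section
/- Let m ≥ 1 be an integer, T > 0, and let U, ρ : [0,T] × ℝ → ℝ be infinitely differentiable functions, 2π-periodic in the second (spatial) variable, satisfying ∂_t ρ(t,z) = ∂_z²ρ(t,z) + ρ(t,z) − 3U(t,z)²ρ(t,z) for all (t,z). Then for every t ∈ [0,T]: t^m ∫₀^{2π} (∂_z ρ(t,z))² dz ≤ ∫₀^t [ (2s^m + m s^{m−1}) ∫₀^{2π} (∂_z ρ(s,z))² dz + 36 s^m (sup_{z∈ℝ}|U(s,z)|)⁴ ∫₀^{2π} ρ(s,z)² dz ] ds. -/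
open MeasureTheory Set intervalIntegral Real Metric
namespace Stmt15Aux


/-- Section derivative in the second variable as an fderiv application. -/
lemma hasDerivAt_right {g : ℝ → ℝ → ℝ} (hg : ContDiff ℝ (⊤ : ℕ∞) fun p : ℝ × ℝ => g p.1 p.2)
    (t z : ℝ) :
    HasDerivAt (fun z' => g t z')
      (fderiv ℝ (fun p : ℝ × ℝ => g p.1 p.2) (t, z) (0, 1)) z := by
  have h1 : HasFDerivAt (fun p : ℝ × ℝ => g p.1 p.2)
      (fderiv ℝ (fun p : ℝ × ℝ => g p.1 p.2) (t, z)) (t, z) :=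
    (hg.differentiable (by simp) (t, z)).hasFDerivAt
  have h2 : HasDerivAt (fun z' : ℝ => ((t, z') : ℝ × ℝ)) ((0 : ℝ), (1 : ℝ)) z :=
    (hasDerivAt_const z t).prodMk (hasDerivAt_id z)
  exact h1.comp_hasDerivAt z h2

lemma hasDerivAt_left {g : ℝ → ℝ → ℝ} (hg : ContDiff ℝ (⊤ : ℕ∞) fun p : ℝ × ℝ => g p.1 p.2)
    (t z : ℝ) :
    HasDerivAt (fun t' => g t' z)
      (fderiv ℝ (fun p : ℝ × ℝ => g p.1 p.2) (t, z) (1, 0)) t := by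
  have h1 : HasFDerivAt (fun p : ℝ × ℝ => g p.1 p.2)
      (fderiv ℝ (fun p : ℝ × ℝ => g p.1 p.2) (t, z)) (t, z) :=
    (hg.differentiable (by simp) (t, z)).hasFDerivAt
  have h2 : HasDerivAt (fun t' : ℝ => ((t', z) : ℝ × ℝ)) ((1 : ℝ), (0 : ℝ)) t :=
    (hasDerivAt_id t).prodMk (hasDerivAt_const t z)
  exact h1.comp_hasDerivAt t h2

lemma deriv_right_eq {g : ℝ → ℝ → ℝ} (hg : ContDiff ℝ (⊤ : ℕ∞) fun p : ℝ × ℝ => g p.1 p.2)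
    (t z : ℝ) :
    deriv (fun z' => g t z') z = fderiv ℝ (fun p : ℝ × ℝ => g p.1 p.2) (t, z) (0, 1) :=
  (hasDerivAt_right hg t z).deriv

lemma deriv_left_eq {g : ℝ → ℝ → ℝ} (hg : ContDiff ℝ (⊤ : ℕ∞) fun p : ℝ × ℝ => g p.1 p.2)
    (t z : ℝ) :
    deriv (fun t' => g t' z) t = fderiv ℝ (fun p : ℝ × ℝ => g p.1 p.2) (t, z) (1, 0) :=
  (hasDerivAt_left hg t z).deriv

lemma contDiff_pz {g : ℝ → ℝ → ℝ} (hg : ContDiff ℝ (⊤ : ℕ∞) fun p : ℝ × ℝ => g p.1 p.2) :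
    ContDiff ℝ (⊤ : ℕ∞) fun p : ℝ × ℝ => deriv (fun z' => g p.1 z') p.2 := by
  have h : (fun p : ℝ × ℝ => deriv (fun z' => g p.1 z') p.2)
      = fun p : ℝ × ℝ => fderiv ℝ (fun q : ℝ × ℝ => g q.1 q.2) p (0, 1) := by
    funext p
    exact deriv_right_eq hg p.1 p.2
  rw [h]
  exact (hg.fderiv_right (by simp)).clm_apply contDiff_const

lemma contDiff_pt {g : ℝ → ℝ → ℝ} (hg : ContDiff ℝ (⊤ : ℕ∞) fun p : ℝ × ℝ => g p.1 p.2) :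
    ContDiff ℝ (⊤ : ℕ∞) fun p : ℝ × ℝ => deriv (fun t' => g t' p.2) p.1 := by
  have h : (fun p : ℝ × ℝ => deriv (fun t' => g t' p.2) p.1)
      = fun p : ℝ × ℝ => fderiv ℝ (fun q : ℝ × ℝ => g q.1 q.2) p (1, 0) := by
    funext p
    exact deriv_left_eq hg p.1 p.2
  rw [h]
  exact (hg.fderiv_right (by simp)).clm_apply contDiff_const

/-- Clairaut / symmetry of second partial derivatives. -/
lemma clairaut {g : ℝ → ℝ → ℝ} (hg : ContDiff ℝ (⊤ : ℕ∞) fun p : ℝ × ℝ => g p.1 p.2)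
    (t z : ℝ) :
    deriv (fun t' => deriv (fun z' => g t' z') z) t
      = deriv (fun z' => deriv (fun t' => g t' z') t) z := by
  set G : ℝ × ℝ → ℝ := fun p => g p.1 p.2 with hG
  have hdG : ContDiff ℝ (⊤ : ℕ∞) (fderiv ℝ G) := hg.fderiv_right (by simp)
  have h1 : deriv (fun t' => deriv (fun z' => g t' z') z) t
      = fderiv ℝ (fun p : ℝ × ℝ => fderiv ℝ G p (0, 1)) (t, z) (1, 0) := by
    have := deriv_left_eq (g := fun t' z' => fderiv ℝ G (t', z') (0, 1))
      (by exact (hdG.clm_apply contDiff_const : ContDiff ℝ (⊤ : ℕ∞) fun p : ℝ × ℝ => fderiv ℝ G p (0,1))) t z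
    simpa [deriv_right_eq hg] using this
  have h2 : deriv (fun z' => deriv (fun t' => g t' z') t) z
      = fderiv ℝ (fun p : ℝ × ℝ => fderiv ℝ G p (1, 0)) (t, z) (0, 1) := by
    have := deriv_right_eq (g := fun t' z' => fderiv ℝ G (t', z') (1, 0))
      (by exact (hdG.clm_apply contDiff_const : ContDiff ℝ (⊤ : ℕ∞) fun p : ℝ × ℝ => fderiv ℝ G p (1,0))) t z
    simpa [deriv_left_eq hg] using this
  have hev : ∀ (v w : ℝ × ℝ), fderiv ℝ (fun p : ℝ × ℝ => fderiv ℝ G p v) (t, z) w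
      = fderiv ℝ (fderiv ℝ G) (t, z) w v := by
    intro v w
    have hd : DifferentiableAt ℝ (fderiv ℝ G) (t, z) := (hdG.differentiable (by simp)) (t, z)
    rw [fderiv_clm_apply hd (differentiableAt_const v)]
    simp
  rw [h1, h2, hev, hev]
  have hsym : IsSymmSndFDerivAt ℝ G (t, z) :=
    hg.contDiffAt.isSymmSndFDerivAt (by rw [minSmoothness_of_isRCLikeNormedField]; exact WithTop.coe_le_coe.mpr (le_top : (2 : ℕ∞) ≤ ⊤))
  exact hsym (1, 0) (0, 1)



lemma periodic_deriv' {f : ℝ → ℝ} {c : ℝ} (h : ∀ z, f (z + c) = f z) (z : ℝ) :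
    deriv f (z + c) = deriv f z := by
  rw [← deriv_comp_add_const f c z]
  congr 1
  funext x
  exact h x

section Sup

variable {V : ℝ → ℝ → ℝ}

lemma bddAbove_abs (hVc : Continuous fun p : ℝ × ℝ => V p.1 p.2)
    (hper : ∀ s z, V s (z + 2 * π) = V s z) (s : ℝ) :
    BddAbove (Set.range fun z => |V s z|) := by
  have hcont : Continuous fun z => |V s z| :=
    ((hVc.comp (Continuous.prodMk_right s)).abs)
  have hsub : Set.range (fun z => |V s z|) ⊆ (fun z => |V s z|) '' (Icc 0 (2 * π)) := by
    rintro x ⟨z, rfl⟩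
    have hp : Function.Periodic (fun z => |V s z|) (2 * π) := fun z => by simp [hper s z]
    obtain ⟨y, hy, hxy⟩ := hp.exists_mem_Ico₀ Real.two_pi_pos z
    exact ⟨y, Ico_subset_Icc_self hy, hxy.symm⟩
  exact (((isCompact_Icc.image hcont)).bddAbove).mono hsub

lemma le_sup (hVc : Continuous fun p : ℝ × ℝ => V p.1 p.2)
    (hper : ∀ s z, V s (z + 2 * π) = V s z) (s z : ℝ) :
    |V s z| ≤ ⨆ z' : ℝ, |V s z'| :=
  le_ciSup (bddAbove_abs hVc hper s) z

lemma sup_nonneg' (hVc : Continuous fun p : ℝ × ℝ => V p.1 p.2)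
    (hper : ∀ s z, V s (z + 2 * π) = V s z) (s : ℝ) :
    0 ≤ ⨆ z' : ℝ, |V s z'| :=
  le_trans (abs_nonneg _) (le_sup hVc hper s 0)

lemma continuous_sup (hVc : Continuous fun p : ℝ × ℝ => V p.1 p.2)
    (hper : ∀ s z, V s (z + 2 * π) = V s z) :
    Continuous fun s => ⨆ z : ℝ, |V s z| := by
  haveI : CompactSpace (Icc (0:ℝ) (2 * π)) := isCompact_iff_compactSpace.mp isCompact_Icc
  haveI : Nonempty (Icc (0:ℝ) (2 * π)) :=
    ⟨⟨0, le_rfl, by positivity⟩⟩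
  set f : C(ℝ × Icc (0:ℝ) (2 * π), ℝ) :=
    ⟨fun p => V p.1 p.2.1, hVc.comp (continuous_fst.prodMk (continuous_subtype_val.comp continuous_snd))⟩ with hf
  have key : (fun s => ⨆ z : ℝ, |V s z|) = fun s => ‖(ContinuousMap.curry f) s‖ := by
    funext s
    have hnorm : ∀ y : Icc (0:ℝ) (2 * π), ‖(ContinuousMap.curry f) s y‖ = |V s y.1| := by
      intro y; rfl
    apply le_antisymm
    · apply ciSup_le
      intro z
      have hp : Function.Periodic (fun z => V s z) (2 * π) := fun z => hper s z
      obtain ⟨y, hy, hxy⟩ := hp.exists_mem_Ico₀ Real.two_pi_pos z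
      have : |V s z| = ‖(ContinuousMap.curry f) s ⟨y, Ico_subset_Icc_self hy⟩‖ := by
        rw [hnorm]; simp only [hxy]
      rw [this]
      exact ContinuousMap.norm_coe_le_norm _ _
    · refine (ContinuousMap.norm_le _ (sup_nonneg' hVc hper s)).mpr ?_
      intro y
      rw [hnorm]
      exact le_sup hVc hper s y.1
  rw [key]
  exact (ContinuousMap.curry f).continuous.norm

end Sup



lemma hasDerivAt_param_integral {φ φ' : ℝ → ℝ → ℝ}
    (hφc : Continuous fun p : ℝ × ℝ => φ p.1 p.2)
    (hφ'c : Continuous fun p : ℝ × ℝ => φ' p.1 p.2)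
    (hd : ∀ t z, HasDerivAt (fun t' => φ t' z) (φ' t z) t)
    (b t₀ : ℝ) :
    HasDerivAt (fun t => ∫ z in (0:ℝ)..b, φ t z) (∫ z in (0:ℝ)..b, φ' t₀ z) t₀ := by
  have hK : IsCompact ((Icc (t₀ - 1) (t₀ + 1)) ×ˢ (uIcc (0:ℝ) b)) :=
    isCompact_Icc.prod isCompact_uIcc
  obtain ⟨C, hC⟩ := hK.exists_bound_of_continuousOn hφ'c.continuousOn
  have key := intervalIntegral.hasDerivAt_integral_of_dominated_loc_of_deriv_le
    (F := φ) (F' := φ') (x₀ := t₀) (bound := fun _ => C) (a := 0) (b := b)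
    (μ := volume) (s := ball t₀ 1) (ball_mem_nhds t₀ one_pos)
    (Filter.Eventually.of_forall fun x =>
      ((hφc.comp (Continuous.prodMk_right x)).aestronglyMeasurable))
    ((hφc.comp (Continuous.prodMk_right t₀)).intervalIntegrable 0 b)
    ((hφ'c.comp (Continuous.prodMk_right t₀)).aestronglyMeasurable)
    (Filter.Eventually.of_forall fun z hz x hx => by
      have hx' : x ∈ Icc (t₀ - 1) (t₀ + 1) := by
        rw [mem_ball, Real.dist_eq] at hx
        constructor <;> [linarith [abs_le.mp hx.le |>.1]; linarith [abs_le.mp hx.le |>.2]]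
      exact hC (x, z) ⟨hx', uIoc_subset_uIcc hz⟩)
    (intervalIntegrable_const)
    (Filter.Eventually.of_forall fun z _ x _ => hd x z)
  exact key.2



lemma ptwise_bound (a b r c : ℝ) (hb : |b| ≤ c) :
    -2 * (a ^ 2 - 3 * b ^ 2 * r * a) ≤ 36 * c ^ 4 * r ^ 2 := by
  have h1 : b ^ 2 ≤ c ^ 2 := sq_le_sq' (abs_le.mp hb).1 (abs_le.mp hb).2
  have h2 : b ^ 4 ≤ c ^ 4 := by nlinarith [sq_nonneg b, sq_nonneg c]
  nlinarith [sq_nonneg (2 * a - 3 * (b ^ 2 * r)), sq_nonneg r, mul_nonneg (mul_nonneg (by positivity : (0:ℝ) ≤ 36) (by nlinarith [abs_nonneg b] : (0:ℝ) ≤ c ^ 4)) (sq_nonneg r)]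

end Stmt15Aux

open MeasureTheory Set intervalIntegral Real Metric Stmt15Aux

/-- Weighted parabolic smoothing estimate for the first variation equation
`∂_t ρ = ∂_z²ρ + ρ − 3U²ρ` with smooth data, `2π`-periodic in space: for
`m ≥ 1` and `t ∈ [0,T]`,
`t^m ∫₀^{2π} (∂_z ρ(t,z))² dz ≤ ∫₀^t [(2s^m + m s^{m−1}) ∫₀^{2π} (∂_z ρ(s,z))² dz
  + 36 s^m ‖U(s,·)‖_∞⁴ ∫₀^{2π} ρ(s,z)² dz] ds`. -/
theorem stmt_15 (m : ℕ) (hm : 1 ≤ m) (T : ℝ) (hT : 0 < T)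
    (U ρ : ℝ → ℝ → ℝ)
    (hU : ContDiff ℝ (⊤ : ℕ∞) fun p : ℝ × ℝ => U p.1 p.2)
    (hρ : ContDiff ℝ (⊤ : ℕ∞) fun p : ℝ × ℝ => ρ p.1 p.2)
    (hUper : ∀ t z : ℝ, U t (z + 2 * Real.pi) = U t z)
    (hρper : ∀ t z : ℝ, ρ t (z + 2 * Real.pi) = ρ t z)
    (hpde : ∀ t ∈ Set.Icc (0 : ℝ) T, ∀ z : ℝ,
      deriv (fun t' => ρ t' z) t =
        deriv (deriv fun z' => ρ t z') z + ρ t z - 3 * (U t z) ^ 2 * ρ t z) :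
    ∀ t ∈ Set.Icc (0 : ℝ) T,
      t ^ m * ∫ z in (0 : ℝ)..(2 * Real.pi), (deriv (fun z' => ρ t z') z) ^ 2 ≤
        ∫ s in (0 : ℝ)..t,
          ((2 * s ^ m + (m : ℝ) * s ^ (m - 1)) *
              ∫ z in (0 : ℝ)..(2 * Real.pi), (deriv (fun z' => ρ s z') z) ^ 2)
            + 36 * s ^ m * (⨆ z : ℝ, |U s z|) ^ 4 *
              ∫ z in (0 : ℝ)..(2 * Real.pi), (ρ s z) ^ 2 := by
  intro t ht
  -- abbreviations for the partial derivatives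
  set u : ℝ → ℝ → ℝ := fun s z => deriv (fun z' => ρ s z') z with hu_def
  set q : ℝ → ℝ → ℝ := fun s z => deriv (fun t' => ρ t' z) s with hq_def
  set w : ℝ → ℝ → ℝ := fun s z => deriv (fun z' => u s z') z with hw_def
  set a : ℝ → ℝ → ℝ := fun s z => deriv (fun t' => u t' z) s with ha_def
  -- smoothness
  have hu_cd : ContDiff ℝ (⊤ : ℕ∞) fun p : ℝ × ℝ => u p.1 p.2 := contDiff_pz hρ
  have hq_cd : ContDiff ℝ (⊤ : ℕ∞) fun p : ℝ × ℝ => q p.1 p.2 := contDiff_pt hρ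
  have hw_cd : ContDiff ℝ (⊤ : ℕ∞) fun p : ℝ × ℝ => w p.1 p.2 := contDiff_pz hu_cd
  have ha_cd : ContDiff ℝ (⊤ : ℕ∞) fun p : ℝ × ℝ => a p.1 p.2 := contDiff_pt hu_cd
  have hρ_c : Continuous fun p : ℝ × ℝ => ρ p.1 p.2 := hρ.continuous
  have hU_c : Continuous fun p : ℝ × ℝ => U p.1 p.2 := hU.continuous
  have hu_c : Continuous fun p : ℝ × ℝ => u p.1 p.2 := hu_cd.continuous
  have hq_c : Continuous fun p : ℝ × ℝ => q p.1 p.2 := hq_cd.continuous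
  have hw_c : Continuous fun p : ℝ × ℝ => w p.1 p.2 := hw_cd.continuous
  have ha_c : Continuous fun p : ℝ × ℝ => a p.1 p.2 := ha_cd.continuous
  -- Clairaut
  have hclair : ∀ s z : ℝ, deriv (fun z' => q s z') z = a s z :=
    fun s z => (clairaut hρ s z).symm
  -- pointwise derivatives
  have hA : ∀ s z : ℝ, HasDerivAt (fun t' => u t' z) (a s z) s :=
    fun s z => ((hasDerivAt_left hu_cd s z).differentiableAt).hasDerivAt
  have hUz : ∀ s z : ℝ, HasDerivAt (fun z' => ρ s z') (u s z) z :=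
    fun s z => ((hasDerivAt_right hρ s z).differentiableAt).hasDerivAt
  have hWz : ∀ s z : ℝ, HasDerivAt (fun z' => u s z') (w s z) z :=
    fun s z => ((hasDerivAt_right hu_cd s z).differentiableAt).hasDerivAt
  have hQz : ∀ s z : ℝ, HasDerivAt (fun z' => q s z') (a s z) z := by
    intro s z
    have := ((hasDerivAt_right hq_cd s z).differentiableAt).hasDerivAt
    rwa [hclair s z] at this
  -- periodicity in `z`
  have hu_per : ∀ s z : ℝ, u s (z + 2 * Real.pi) = u s z :=
    fun s z => periodic_deriv' (hρper s) z
  have hq_per : ∀ s z : ℝ, q s (z + 2 * Real.pi) = q s z := by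
    intro s z
    have : (fun t' => ρ t' (z + 2 * Real.pi)) = fun t' => ρ t' z := by
      funext t'; exact hρper t' z
    simp only [hq_def, this]
  have hu_per' : ∀ s : ℝ, u s (2 * Real.pi) = u s 0 := by
    intro s; have := hu_per s 0; rwa [zero_add] at this
  have hq_per' : ∀ s : ℝ, q s (2 * Real.pi) = q s 0 := by
    intro s; have := hq_per s 0; rwa [zero_add] at this
  have hρ_per' : ∀ s : ℝ, ρ s (2 * Real.pi) = ρ s 0 := by
    intro s; have := hρper s 0; rwa [zero_add] at this
  -- functions of time
  set F : ℝ → ℝ := fun s => ∫ z in (0:ℝ)..(2 * Real.pi), (u s z) ^ 2 with hF_def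
  set R : ℝ → ℝ := fun s => ∫ z in (0:ℝ)..(2 * Real.pi), (ρ s z) ^ 2 with hR_def
  set D : ℝ → ℝ := fun s => ∫ z in (0:ℝ)..(2 * Real.pi), 2 * u s z * a s z with hD_def
  set M : ℝ → ℝ := fun s => ⨆ z : ℝ, |U s z| with hM_def
  -- derivative of F
  have hF' : ∀ s : ℝ, HasDerivAt F (D s) s := by
    intro s
    apply hasDerivAt_param_integral (φ := fun s z => (u s z) ^ 2)
      (φ' := fun s z => 2 * u s z * a s z)
      (hu_c.pow 2) ((continuous_const.mul hu_c).mul ha_c) ?_ (2 * Real.pi) s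
    intro s z
    have h := (hA s z).pow 2
    norm_num at h
    exact h
  -- interval integrability of everything in sight (fixed s)
  have hint : ∀ (f : ℝ → ℝ → ℝ), (Continuous fun p : ℝ × ℝ => f p.1 p.2) → ∀ s : ℝ,
      IntervalIntegrable (fun z => f s z) volume 0 (2 * Real.pi) :=
    fun f hf s => ((hf.comp (Continuous.prodMk_right s)).intervalIntegrable 0 (2 * Real.pi))
  -- the key differential inequality
  have hkey : ∀ s ∈ Icc (0:ℝ) T, D s ≤ 2 * F s + 36 * M s ^ 4 * R s := by
    intro s hs
    -- integration by parts: ∫ u a = -∫ w q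
    have parts1 : (∫ z in (0:ℝ)..(2 * Real.pi), u s z * a s z)
        = -(∫ z in (0:ℝ)..(2 * Real.pi), w s z * q s z) := by
      have : (∫ z in (0:ℝ)..(2 * Real.pi), u s z * a s z)
          = u s (2 * Real.pi) * q s (2 * Real.pi) - u s 0 * q s 0
            - ∫ z in (0:ℝ)..(2 * Real.pi), w s z * q s z :=
        intervalIntegral.integral_mul_deriv_eq_deriv_mul
          (fun x _ => hWz s x) (fun x _ => hQz s x)
          (hint w hw_c s) (hint a ha_c s)
      rw [this, hu_per' s, hq_per' s]
      ring
    -- integration by parts: ∫ w ρ = -∫ u²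
    have parts2 : (∫ z in (0:ℝ)..(2 * Real.pi), w s z * ρ s z)
        = -(∫ z in (0:ℝ)..(2 * Real.pi), (u s z) ^ 2) := by
      have h : (∫ z in (0:ℝ)..(2 * Real.pi), ρ s z * w s z)
          = ρ s (2 * Real.pi) * u s (2 * Real.pi) - ρ s 0 * u s 0
            - ∫ z in (0:ℝ)..(2 * Real.pi), u s z * u s z :=
        intervalIntegral.integral_mul_deriv_eq_deriv_mul
          (fun x _ => hUz s x) (fun x _ => hWz s x)
          (hint u hu_c s) (hint w hw_c s)
      have hcomm : (∫ z in (0:ℝ)..(2 * Real.pi), w s z * ρ s z)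
          = ∫ z in (0:ℝ)..(2 * Real.pi), ρ s z * w s z := by
        congr 1; funext z; ring
      have hsq : (∫ z in (0:ℝ)..(2 * Real.pi), u s z * u s z)
          = ∫ z in (0:ℝ)..(2 * Real.pi), (u s z) ^ 2 := by
        congr 1; funext z; ring
      rw [hcomm, h, hρ_per' s, hu_per' s, hsq]
      ring
    -- expand q using the PDE
    have hq_expand : ∀ z : ℝ, q s z = w s z + ρ s z - 3 * (U s z) ^ 2 * ρ s z :=
      fun z => hpde s hs z
    have hsplit : (∫ z in (0:ℝ)..(2 * Real.pi), w s z * q s z)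
        = (∫ z in (0:ℝ)..(2 * Real.pi), ((w s z) ^ 2 - 3 * (U s z) ^ 2 * ρ s z * w s z))
          + ∫ z in (0:ℝ)..(2 * Real.pi), w s z * ρ s z := by
      rw [← intervalIntegral.integral_add]
      · congr 1; funext z; rw [hq_expand z]; ring
      · exact hint (fun s z => (w s z) ^ 2 - 3 * (U s z) ^ 2 * ρ s z * w s z)
          (((hw_c.pow 2).sub (((continuous_const.mul (hU_c.pow 2)).mul hρ_c).mul hw_c))) s
      · exact hint (fun s z => w s z * ρ s z) (hw_c.mul hρ_c) s
    -- assemble D s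
    have hDs : D s = (∫ z in (0:ℝ)..(2 * Real.pi),
        (-2) * ((w s z) ^ 2 - 3 * (U s z) ^ 2 * ρ s z * w s z)) + 2 * F s := by
      have e1 : D s = 2 * ∫ z in (0:ℝ)..(2 * Real.pi), u s z * a s z := by
        have hh : (fun z => 2 * u s z * a s z) = fun z => 2 * (u s z * a s z) := by
          funext z; ring
        simp only [hD_def, hh]
        exact intervalIntegral.integral_const_mul 2 _
      have e2 : (∫ z in (0:ℝ)..(2 * Real.pi),
          (-2) * ((w s z) ^ 2 - 3 * (U s z) ^ 2 * ρ s z * w s z))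
          = (-2) * ∫ z in (0:ℝ)..(2 * Real.pi),
            ((w s z) ^ 2 - 3 * (U s z) ^ 2 * ρ s z * w s z) :=
        intervalIntegral.integral_const_mul _ _
      rw [e1, parts1, hsplit, parts2, e2, hF_def]
      ring
    -- pointwise bound on the first integral
    have hmono : (∫ z in (0:ℝ)..(2 * Real.pi),
        (-2) * ((w s z) ^ 2 - 3 * (U s z) ^ 2 * ρ s z * w s z))
        ≤ ∫ z in (0:ℝ)..(2 * Real.pi), 36 * M s ^ 4 * (ρ s z) ^ 2 := by
      apply intervalIntegral.integral_mono_on (by positivity)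
      · exact hint (fun s z => (-2) * ((w s z) ^ 2 - 3 * (U s z) ^ 2 * ρ s z * w s z))
          (continuous_const.mul
            ((hw_c.pow 2).sub (((continuous_const.mul (hU_c.pow 2)).mul hρ_c).mul hw_c))) s
      · exact Continuous.intervalIntegrable
          (continuous_const.mul ((hρ_c.comp (Continuous.prodMk_right s)).pow 2)) 0 (2 * Real.pi)
      · intro z _
        exact ptwise_bound (w s z) (U s z) (ρ s z) (M s) (le_sup hU_c hUper s z)
    have hRint : (∫ z in (0:ℝ)..(2 * Real.pi), 36 * M s ^ 4 * (ρ s z) ^ 2)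
        = 36 * M s ^ 4 * R s := by
      rw [hR_def]
      exact intervalIntegral.integral_const_mul _ _
    rw [hDs]
    rw [hRint] at hmono
    linarith
  -- derivative of G(s) = s^m * F s
  have hG : ∀ s : ℝ, HasDerivAt (fun r => r ^ m * F r)
      ((m : ℝ) * s ^ (m - 1) * F s + s ^ m * D s) s :=
    fun s => (hasDerivAt_pow m s).mul (hF' s)
  -- continuity facts
  have hF_cont : Continuous F := by
    apply intervalIntegral.continuous_parametric_intervalIntegral_of_continuous'
    exact (hu_c.pow 2 : Continuous fun p : ℝ × ℝ => (u p.1 p.2) ^ 2)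
  have hD_cont : Continuous D := by
    apply intervalIntegral.continuous_parametric_intervalIntegral_of_continuous'
    exact ((continuous_const.mul hu_c).mul ha_c :
      Continuous fun p : ℝ × ℝ => 2 * u p.1 p.2 * a p.1 p.2)
  have hR_cont : Continuous R := by
    apply intervalIntegral.continuous_parametric_intervalIntegral_of_continuous'
    exact (hρ_c.pow 2 : Continuous fun p : ℝ × ℝ => (ρ p.1 p.2) ^ 2)
  have hM_cont : Continuous M := continuous_sup hU_c hUper
  have hG'_cont : Continuous fun s => (m : ℝ) * s ^ (m - 1) * F s + s ^ m * D s :=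
    ((continuous_const.mul (continuous_pow (m - 1))).mul hF_cont).add
      ((continuous_pow m).mul hD_cont)
  have hH_cont : Continuous fun s =>
      (2 * s ^ m + (m : ℝ) * s ^ (m - 1)) * F s + 36 * s ^ m * M s ^ 4 * R s :=
    (((continuous_const.mul (continuous_pow m)).add
        (continuous_const.mul (continuous_pow (m - 1)))).mul hF_cont).add
      (((continuous_const.mul (continuous_pow m)).mul (hM_cont.pow 4)).mul hR_cont)
  have h0t : (0:ℝ) ≤ t := ht.1
  -- FTC
  have hFTC : (∫ s in (0:ℝ)..t, ((m : ℝ) * s ^ (m - 1) * F s + s ^ m * D s))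
      = t ^ m * F t - 0 ^ m * F 0 :=
    intervalIntegral.integral_eq_sub_of_hasDerivAt (fun s _ => hG s)
      (hG'_cont.intervalIntegrable 0 t)
  have hzero : (0:ℝ) ^ m * F 0 = 0 := by
    rw [zero_pow (by omega : m ≠ 0), zero_mul]
  -- compare integrands
  have hcomp : (∫ s in (0:ℝ)..t, ((m : ℝ) * s ^ (m - 1) * F s + s ^ m * D s))
      ≤ ∫ s in (0:ℝ)..t,
        ((2 * s ^ m + (m : ℝ) * s ^ (m - 1)) * F s + 36 * s ^ m * M s ^ 4 * R s) := by
    apply intervalIntegral.integral_mono_on h0t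
      (hG'_cont.intervalIntegrable 0 t) (hH_cont.intervalIntegrable 0 t)
    intro s hs
    have hsT : s ∈ Icc (0:ℝ) T := ⟨hs.1, le_trans hs.2 ht.2⟩
    have hD_le := hkey s hsT
    have hsm : (0:ℝ) ≤ s ^ m := pow_nonneg hs.1 m
    nlinarith [mul_le_mul_of_nonneg_left hD_le hsm]
  calc t ^ m * F t = t ^ m * F t - 0 ^ m * F 0 := by rw [hzero]; ring
    _ = ∫ s in (0:ℝ)..t, ((m : ℝ) * s ^ (m - 1) * F s + s ^ m * D s) := hFTC.symm
    _ ≤ _ := hcomp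
end
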